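/- For every configuration M(i,j,U,V) of Minsky's universal Turing machine, the following are equivalent: (i) the machine, started in configuration M(i,j,U,V), halts in finitely many steps; (ii) there exists a positive integer N such that t^N · F(i,j,U,V) = 0 in the algebra H. -/

import Mathlib

noncomputable section

/-- Direction of the head movement of the Turing machine. -/
inductive Dir
  | L
  | R
deriving DecidableEq

/-- The instruction table of Minsky's universal Turing machine: for a state `i` and a color `j`,
`instr i j` is `some (d, q, p)` where `d` is the direction of the head movement, `q` the new
state and `p` the new color of the current cell; it is `none` exactly for the STOP pair
`(4, 3)`. -/
def instr : Fin 7 → Fin 4 → Option (Dir × Fin 7 × Fin 4) := fun i j =>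
  match i.val, j.val with
  | 0, 0 => some (Dir.L, 4, 1)
  | 0, 1 => some (Dir.L, 1, 3)
  | 0, 2 => some (Dir.R, 0, 0)
  | 0, 3 => some (Dir.R, 0, 1)
  | 1, 0 => some (Dir.L, 1, 2)
  | 1, 1 => some (Dir.L, 1, 3)
  | 1, 2 => some (Dir.R, 0, 0)
  | 1, 3 => some (Dir.L, 1, 3)
  | 2, 0 => some (Dir.R, 2, 2)
  | 2, 1 => some (Dir.R, 2, 1)
  | 2, 2 => some (Dir.R, 2, 0)
  | 2, 3 => some (Dir.L, 4, 1)
  | 3, 0 => some (Dir.R, 3, 2)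
  | 3, 1 => some (Dir.R, 3, 1)
  | 3, 2 => some (Dir.R, 3, 0)
  | 3, 3 => some (Dir.L, 4, 0)
  | 4, 0 => some (Dir.L, 5, 2)
  | 4, 1 => some (Dir.L, 4, 1)
  | 4, 2 => some (Dir.L, 4, 0)
  | 4, 3 => none
  | 5, 0 => some (Dir.L, 5, 2)
  | 5, 1 => some (Dir.L, 5, 1)
  | 5, 2 => some (Dir.L, 6, 2)
  | 5, 3 => some (Dir.R, 2, 1)
  | 6, 0 => some (Dir.R, 0, 3)
  | 6, 1 => some (Dir.R, 6, 3)
  | 6, 2 => some (Dir.R, 6, 2)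
  | 6, 3 => some (Dir.R, 3, 1)
  | _, _ => none

/-- A configuration `M(i, j, U, V)` of the machine: the current state `i`, the color `j` of the
current cell, and the lists `U`, `V` of colors of the tape to the left and to the right of the
head. -/
structure Config where
  state : Fin 7
  color : Fin 4
  left : List (Fin 4)
  right : List (Fin 4)

/-- One step of the machine: for a left pair, `M(i,j,U'++[k],V)` passes to
`M(q i j, k, U', p i j :: V)` and `M(i,j,[],V)` passes to `M(q i j, 0, [], p i j :: V)`;
for a right pair, `M(i,j,U,k::V')` passes to `M(q i j, k, U ++ [p i j], V')` and
`M(i,j,U,[])` passes to `M(q i j, 0, U ++ [p i j], [])`. No step is possible from the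
STOP pair `(4,3)`. -/
def step (c : Config) : Option Config :=
  match instr c.state c.color with
  | none => none
  | some (Dir.L, q, p) =>
    match c.left.reverse with
    | [] => some ⟨q, 0, [], p :: c.right⟩
    | k :: U' => some ⟨q, k, U'.reverse, p :: c.right⟩
  | some (Dir.R, q, p) =>
    match c.right with
    | [] => some ⟨q, 0, c.left ++ [p], []⟩
    | k :: V' => some ⟨q, k, c.left ++ [p], V'⟩

/-- Iterating `n` steps of the machine. -/
def stepsFrom : ℕ → Config → Option Config
  | 0, c => some c
  | n + 1, c => (step c).bind (stepsFrom n)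

/-- The machine halts from the configuration `c` if after finitely many steps it reaches a
configuration whose (state, current color) pair is `(4, 3)`. -/
def Halts (c : Config) : Prop :=
  ∃ n c', stepsFrom n c = some c' ∧ c'.state = 4 ∧ c'.color = 3

/-- The alphabet `Ψ = {t, s, a_0, …, a_3, Q_0, …, Q_6, P_0, …, P_3, L, R}`. -/
inductive Psi
  | t
  | s
  | a (k : Fin 4)
  | Q (i : Fin 7)
  | P (j : Fin 4)
  | L
  | R
deriving DecidableEq, Fintype

/-- The image in the free algebra of a word over the alphabet `Ψ`. -/
def wrd (K : Type*) [Field K] (l : List Psi) : FreeAlgebra K Psi :=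
  (l.map (FreeAlgebra.ι K)).prod

open Psi in
/-- The defining relations of the algebra `H`. -/
inductive HRel (K : Type*) [Field K] : FreeAlgebra K Psi → FreeAlgebra K Psi → Prop
  | rel1 (k : Fin 4) :
      HRel K (wrd K [t, L, a k]) (wrd K [L, t, a k])
  | rel2 (k l : Fin 4) :
      HRel K (wrd K [t, a k, a l]) (wrd K [a k, t, a l])
  | rel9 :
      HRel K (wrd K [s, R]) (wrd K [R, s])
  | rel8 (k : Fin 4) :
      HRel K (wrd K [s, a k]) (wrd K [a k, s])
  | rel3 (i : Fin 7) (j : Fin 4) (q : Fin 7) (p : Fin 4) (k : Fin 4)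
      (h : instr i j = some (Dir.L, q, p)) :
      HRel K (wrd K [t, a k, Q i, P j]) (wrd K [Q q, P k, a p, s])
  | rel5 (i : Fin 7) (j : Fin 4) (q : Fin 7) (p : Fin 4)
      (h : instr i j = some (Dir.L, q, p)) :
      HRel K (wrd K [t, L, Q i, P j]) (wrd K [L, Q q, P 0, a p, s])
  | rel4 (i : Fin 7) (j : Fin 4) (q : Fin 7) (p : Fin 4) (l k : Fin 4)
      (h : instr i j = some (Dir.R, q, p)) :
      HRel K (wrd K [t, a l, Q i, P j, a k]) (wrd K [a l, a p, Q q, P k, s])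
  | rel4b (i : Fin 7) (j : Fin 4) (q : Fin 7) (p : Fin 4) (k : Fin 4)
      (h : instr i j = some (Dir.R, q, p)) :
      HRel K (wrd K [t, L, Q i, P j, a k]) (wrd K [L, a p, Q q, P k, s])
  | rel6 (i : Fin 7) (j : Fin 4) (q : Fin 7) (p : Fin 4) (l : Fin 4)
      (h : instr i j = some (Dir.R, q, p)) :
      HRel K (wrd K [t, a l, Q i, P j, R]) (wrd K [a l, a p, Q q, P 0, R, s])
  | rel6b (i : Fin 7) (j : Fin 4) (q : Fin 7) (p : Fin 4)
      (h : instr i j = some (Dir.R, q, p)) :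
      HRel K (wrd K [t, L, Q i, P j, R]) (wrd K [L, a p, Q q, P 0, R, s])
  | rel7 :
      HRel K (wrd K [Q 4, P 3]) 0

/-- The algebra `H`: the quotient of the free associative unital `K`-algebra on `Ψ` by the
two-sided ideal generated by the defining relations. -/
abbrev AlgH (K : Type*) [Field K] := RingQuot (HRel K)

/-- The image in `H` of a word over the alphabet `Ψ`. -/
def mkw (K : Type*) [Field K] (l : List Psi) : AlgH K :=
  RingQuot.mkAlgHom K (HRel K) (wrd K l)

/-- The image of the letter `t` in `H`. -/
def tEl (K : Type*) [Field K] : AlgH K := mkw K [Psi.t]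

/-- The image of the letter `s` in `H`. -/
def sEl (K : Type*) [Field K] : AlgH K := mkw K [Psi.s]

/-- The word `L a_{u_1} ⋯ a_{u_k} Q_i P_j a_{v_1} ⋯ a_{v_l} R` associated to a configuration. -/
def confWord (c : Config) : List Psi :=
  Psi.L :: (c.left.map Psi.a ++ [Psi.Q c.state, Psi.P c.color] ++ c.right.map Psi.a ++ [Psi.R])

/-- The element `F(i, j, U, V)` of the algebra `H` associated to a configuration. -/
def F (K : Type*) [Field K] (c : Config) : AlgH K := mkw K (confWord c)

/-!
A machine step `c → c'` gives `t · F(c) = F(c') · s` in `H`: the letter `t` commutes rightwards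
through `L` and the `a`'s up to the head, one defining relation performs the step, and the
emitted `s` commutes rightwards past the `a`'s and `R`. Hence `t^n · F(c) = F(cₙ) · sⁿ`, which
vanishes as soon as `cₙ` shows the stop pair, because `Q₄P₃ = 0`.

Conversely, `H` acts on the free `K`-module on words over `Ψ`: a letter acts on a word by the
partial map that prepends it and then applies the defining relations from left to right
(`t` performs a machine step, `s` travels to the right end, `Q₄P₃` is sent to `none`, i.e. to
zero). If `c` does not show the stop pair, `F(c) · sⁿ` maps the empty word to its own word, so
it is not zero; if the machine never halts, this applies to `t^N · F(c) = F(c_N) · s^N`.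
-/

namespace MinskyUTM

section PartialMap

variable (R : Type*) [Semiring R] {α : Type*}

def ofPartialMap (f : α → Option α) : Module.End R (α →₀ R) :=
  Finsupp.linearCombination R fun u => (f u).elim 0 (Finsupp.single · 1)

variable {R}

lemma ofPartialMap_single (f : α → Option α) (u : α) (r : R) :
    ofPartialMap R f (Finsupp.single u r) = r • (f u).elim 0 (Finsupp.single · 1) :=
  Finsupp.linearCombination_single R r u

lemma ofPartialMap_some : ofPartialMap R (some : α → Option α) = 1 :=
  Finsupp.lhom_ext fun u r => by simp [ofPartialMap_single]

lemma ofPartialMap_none : ofPartialMap R (fun _ : α => none) = 0 :=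
  Finsupp.lhom_ext fun u r => by simp [ofPartialMap_single]

lemma ofPartialMap_mul (f g : α → Option α) :
    ofPartialMap R f * ofPartialMap R g = ofPartialMap R fun u => (g u).bind f :=
  Finsupp.lhom_ext fun u r => by
    rcases h : g u with _ | v <;> simp [ofPartialMap_single, h]

end PartialMap

lemma instr_eq_none_iff : ∀ (i : Fin 7) (j : Fin 4), instr i j = none ↔ i = 4 ∧ j = 3 := by
  decide

lemma step_of_instr_eq_L {c : Config} {q : Fin 7} {p : Fin 4}
    (h : instr c.state c.color = some (Dir.L, q, p)) :
    step c = some ⟨q, c.left.getLastD 0, c.left.dropLast, p :: c.right⟩ := by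
  obtain ⟨i, j, U, V⟩ := c
  rcases List.eq_nil_or_concat U with rfl | ⟨U', k, rfl⟩ <;> simp_all [step]

lemma step_of_instr_eq_R {c : Config} {q : Fin 7} {p : Fin 4}
    (h : instr c.state c.color = some (Dir.R, q, p)) :
    step c = some ⟨q, c.right.headD 0, c.left ++ [p], c.right.tail⟩ := by
  obtain ⟨i, j, U, V⟩ := c
  cases V <;> simp_all [step]

lemma exists_step_eq_some {c : Config} (hc : ¬(c.state = 4 ∧ c.color = 3)) :
    ∃ c', step c = some c' := by
  rw [← instr_eq_none_iff, ← ne_eq, Option.ne_none_iff_exists'] at hc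
  obtain ⟨⟨d, q, p⟩, h⟩ := hc
  cases d
  exacts [⟨_, step_of_instr_eq_L h⟩, ⟨_, step_of_instr_eq_R h⟩]

lemma halts_of_step_eq_some {c c' : Config} (h : step c = some c') (h' : Halts c') : Halts c := by
  obtain ⟨n, c'', hn, hstop⟩ := h'
  exact ⟨n + 1, c'', by simp [stepsFrom, h, hn], hstop⟩

lemma exists_stepsFrom_of_not_halts {c : Config} (hc : ¬Halts c) (n : ℕ) :
    ∃ c', stepsFrom n c = some c' ∧ ¬(c'.state = 4 ∧ c'.color = 3) := by
  induction n generalizing c with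
  | zero => exact ⟨c, rfl, fun hstop => hc ⟨0, c, rfl, hstop⟩⟩
  | succ n ih =>
    have hstop : ¬(c.state = 4 ∧ c.color = 3) := fun hstop => hc ⟨0, c, rfl, hstop⟩
    obtain ⟨c₁, h₁⟩ := exists_step_eq_some hstop
    obtain ⟨c', hn, hc'⟩ := ih (mt (halts_of_step_eq_some h₁) hc)
    exact ⟨c', by simp [stepsFrom, h₁, hn], hc'⟩

open Psi

variable {K : Type*} [Field K]

lemma mkw_append (l₁ l₂ : List Psi) : mkw K (l₁ ++ l₂) = mkw K l₁ * mkw K l₂ := by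
  simp [mkw, wrd]

lemma mkw_replicate (n : ℕ) (x : Psi) : mkw K (List.replicate n x) = mkw K [x] ^ n := by
  induction n with
  | zero => simp [mkw, wrd]
  | succ n ih => rw [List.replicate_succ', mkw_append, ih, pow_succ]

lemma mkw_congr_rel {A B : List Psi} (h : HRel K (wrd K A) (wrd K B)) (x y : List Psi) :
    mkw K (x ++ (A ++ y)) = mkw K (x ++ (B ++ y)) := by
  have hAB : mkw K A = mkw K B := RingQuot.mkAlgHom_rel K h
  rw [mkw_append, mkw_append, mkw_append x, mkw_append B, hAB]

lemma mkw_eq_zero_of_stop (x y : List Psi) : mkw K (x ++ Q 4 :: P 3 :: y) = 0 := by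
  have h : mkw K [Q 4, P 3] = 0 := (RingQuot.mkAlgHom_rel K HRel.rel7).trans (map_zero _)
  rw [show Q 4 :: P 3 :: y = [Q 4, P 3] ++ y from rfl, mkw_append, mkw_append, h, zero_mul,
    mul_zero]

lemma mkw_t_walk (x : List Psi) (U : List (Fin 4)) (k : Fin 4) (y : List Psi) :
    mkw K (x ++ t :: (U.map a ++ a k :: y)) = mkw K (x ++ (U.map a ++ t :: a k :: y)) := by
  induction U generalizing x with
  | nil => rfl
  | cons u U ih =>
    cases U with
    | nil => exact mkw_congr_rel (HRel.rel2 u k) x y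
    | cons u' U =>
      have h := mkw_congr_rel (K := K) (HRel.rel2 u u') x (U.map a ++ a k :: y)
      simp only [List.map_cons, List.cons_append, List.nil_append] at h ih ⊢
      rw [h]
      simpa using ih (x ++ [a u])

lemma mkw_tL_walk (x : List Psi) (U : List (Fin 4)) (k : Fin 4) (y : List Psi) :
    mkw K (x ++ t :: L :: (U.map a ++ a k :: y)) =
      mkw K (x ++ L :: (U.map a ++ t :: a k :: y)) := by
  cases U with
  | nil => exact mkw_congr_rel (HRel.rel1 k) x y
  | cons u U =>
    have h := mkw_congr_rel (K := K) (HRel.rel1 u) x (U.map a ++ a k :: y)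
    simp only [List.map_cons, List.cons_append, List.nil_append] at h ⊢
    rw [h]
    simpa using mkw_t_walk (K := K) (x ++ [L]) (u :: U) k y

lemma mkw_s_walk (x : List Psi) (V : List (Fin 4)) (y : List Psi) :
    mkw K (x ++ s :: (V.map a ++ R :: y)) = mkw K (x ++ (V.map a ++ R :: s :: y)) := by
  induction V generalizing x with
  | nil => exact mkw_congr_rel HRel.rel9 x y
  | cons v V ih =>
    have h := mkw_congr_rel (K := K) (HRel.rel8 v) x (V.map a ++ R :: y)
    simp only [List.map_cons, List.cons_append, List.nil_append] at h ⊢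
    rw [h]
    simpa using ih (x ++ [a v])

lemma confWord_eq (c : Config) :
    confWord c = L :: (c.left.map a ++ Q c.state :: P c.color :: (c.right.map a ++ [R])) := by
  simp [confWord]

lemma tEl_mul_F_of_instr_eq_L {i q : Fin 7} {j p : Fin 4} (h : instr i j = some (Dir.L, q, p))
    (U V : List (Fin 4)) :
    tEl K * F K ⟨i, j, U, V⟩ = F K ⟨q, U.getLastD 0, U.dropLast, p :: V⟩ * sEl K := by
  rw [tEl, sEl, F, F, ← mkw_append, ← mkw_append]
  rcases List.eq_nil_or_concat U with rfl | ⟨U, k, rfl⟩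
  · have h₁ := mkw_congr_rel (K := K) (HRel.rel5 i j q p h) [] (V.map a ++ [R])
    have h₂ := mkw_s_walk (K := K) [L, Q q, P 0, a p] V []
    simp only [confWord_eq, List.map_nil, List.map_cons, List.cons_append,
      List.nil_append, List.append_assoc, List.getLastD_nil, List.dropLast_nil] at h₁ h₂ ⊢
    rw [h₁, h₂]
  · have h₀ := mkw_tL_walk (K := K) [] U k (Q i :: P j :: (V.map a ++ [R]))
    have h₁ := mkw_congr_rel (K := K) (HRel.rel3 i j q p k h) (L :: U.map a) (V.map a ++ [R])
    have h₂ := mkw_s_walk (K := K) (L :: U.map a ++ [Q q, P k, a p]) V []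
    simp only [confWord_eq, List.map_nil, List.map_cons, List.map_append, List.cons_append,
      List.nil_append, List.append_assoc, List.concat_eq_append, List.getLastD_concat,
      List.dropLast_concat] at h₀ h₁ h₂ ⊢
    rw [h₀, h₁, h₂]

lemma tEl_mul_F_of_instr_eq_R {i q : Fin 7} {j p : Fin 4} (h : instr i j = some (Dir.R, q, p))
    (U V : List (Fin 4)) :
    tEl K * F K ⟨i, j, U, V⟩ = F K ⟨q, V.headD 0, U ++ [p], V.tail⟩ * sEl K := by
  rw [tEl, sEl, F, F, ← mkw_append, ← mkw_append]
  rcases List.eq_nil_or_concat U with rfl | ⟨U, k, rfl⟩ <;> rcases V with _ | ⟨v, V⟩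
  · simpa [confWord_eq] using mkw_congr_rel (K := K) (HRel.rel6b i j q p h) [] []
  · have h₁ := mkw_congr_rel (K := K) (HRel.rel4b i j q p v h) [] (V.map a ++ [R])
    have h₂ := mkw_s_walk (K := K) [L, a p, Q q, P v] V []
    simp only [confWord_eq, List.map_nil, List.map_cons, List.cons_append,
      List.nil_append, List.append_assoc, List.headD_cons, List.tail_cons] at h₁ h₂ ⊢
    rw [h₁, h₂]
  · have h₀ := mkw_tL_walk (K := K) [] U k [Q i, P j, R]
    have h₁ := mkw_congr_rel (K := K) (HRel.rel6 i j q p k h) (L :: U.map a) []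
    simp only [confWord_eq, List.map_nil, List.map_cons, List.map_append, List.cons_append,
      List.nil_append, List.append_assoc, List.concat_eq_append, List.headD_nil,
      List.tail_nil] at h₀ h₁ ⊢
    rw [h₀, h₁]
  · have h₀ := mkw_tL_walk (K := K) [] U k (Q i :: P j :: a v :: (V.map a ++ [R]))
    have h₁ := mkw_congr_rel (K := K) (HRel.rel4 i j q p k v h) (L :: U.map a) (V.map a ++ [R])
    have h₂ := mkw_s_walk (K := K) (L :: U.map a ++ [a k, a p, Q q, P v]) V []
    simp only [confWord_eq, List.map_nil, List.map_cons, List.map_append, List.cons_append,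
      List.nil_append, List.append_assoc, List.concat_eq_append, List.headD_cons,
      List.tail_cons] at h₀ h₁ h₂ ⊢
    rw [h₀, h₁, h₂]

lemma tEl_mul_F_of_step {c c' : Config} (h : step c = some c') :
    tEl K * F K c = F K c' * sEl K := by
  obtain ⟨i, j, U, V⟩ := c
  rcases hi : instr i j with _ | ⟨_ | _, q, p⟩
  · simp [step, hi] at h
  · rw [step_of_instr_eq_L hi, Option.some_inj] at h
    exact h ▸ tEl_mul_F_of_instr_eq_L hi U V
  · rw [step_of_instr_eq_R hi, Option.some_inj] at h
    exact h ▸ tEl_mul_F_of_instr_eq_R hi U V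

lemma tEl_pow_mul_F {n : ℕ} {c c' : Config} (h : stepsFrom n c = some c') :
    tEl K ^ n * F K c = F K c' * sEl K ^ n := by
  induction n generalizing c with
  | zero =>
    obtain rfl : c = c' := Option.some_inj.1 h
    simp
  | succ n ih =>
    obtain ⟨c₁, h₁, hn⟩ := Option.bind_eq_some_iff.1 h
    calc tEl K ^ (n + 1) * F K c = tEl K ^ n * (tEl K * F K c) := by rw [pow_succ, mul_assoc]
      _ = tEl K ^ n * F K c₁ * sEl K := by rw [tEl_mul_F_of_step h₁, mul_assoc]
      _ = F K c' * sEl K ^ (n + 1) := by rw [ih hn, pow_succ, mul_assoc]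

lemma F_eq_zero_of_stop {c : Config} (h : c.state = 4 ∧ c.color = 3) : F K c = 0 := by
  obtain ⟨i, j, U, V⟩ := c
  obtain ⟨rfl, rfl⟩ := h
  simpa [F, confWord_eq] using mkw_eq_zero_of_stop (K := K) (L :: U.map a) (V.map a ++ [R])

def pushS : List Psi → List Psi
  | a k :: r => a k :: pushS r
  | R :: r => R :: pushS r
  | r => s :: r

def consQP (q : Fin 7) (k : Fin 4) (r : List Psi) : Option (List Psi) :=
  if instr q k = none then none else some (Q q :: P k :: r)

def pushT : List Psi → Option (List Psi)
  | L :: a k :: r => (pushT (a k :: r)).map (L :: ·)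
  | a k :: a l :: r => (pushT (a l :: r)).map (a k :: ·)
  | a k :: Q i :: P j :: r =>
      match instr i j, r with
      | some (Dir.L, q, p), r => consQP q k (a p :: pushS r)
      | some (Dir.R, q, p), a k' :: r => (consQP q k' (pushS r)).map (a k :: a p :: ·)
      | some (Dir.R, q, p), R :: r => (consQP q 0 (R :: pushS r)).map (a k :: a p :: ·)
      | _, r => some (t :: a k :: Q i :: P j :: r)
  | L :: Q i :: P j :: r =>
      match instr i j, r with
      | some (Dir.L, q, p), r => (consQP q 0 (a p :: pushS r)).map (L :: ·)
      | some (Dir.R, q, p), a k :: r => (consQP q k (pushS r)).map (L :: a p :: ·)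
      | some (Dir.R, q, p), R :: r => (consQP q 0 (R :: pushS r)).map (L :: a p :: ·)
      | _, r => some (t :: L :: Q i :: P j :: r)
  | r => some (t :: r)

def act : Psi → List Psi → Option (List Psi)
  | t, r => pushT r
  | s, r => some (pushS r)
  | Q q, P k :: r => consQP q k r
  | x, r => some (x :: r)

def actWord : List Psi → List Psi → Option (List Psi)
  | [], r => some r
  | x :: l, r => (actWord l r).bind (act x)

variable (K)

def rep : FreeAlgebra K Psi →ₐ[K] Module.End K (List Psi →₀ K) :=
  FreeAlgebra.lift K fun x => ofPartialMap K (act x)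

variable {K}

lemma rep_wrd (l : List Psi) : rep K (wrd K l) = ofPartialMap K (actWord l) := by
  induction l with
  | nil => simp [wrd, actWord, ofPartialMap_some]
  | cons x l ih =>
    rw [show wrd K (x :: l) = FreeAlgebra.ι K x * wrd K l by simp [wrd], map_mul, ih, rep,
      FreeAlgebra.lift_ι_apply, ofPartialMap_mul]
    rfl

lemma bind_act_L (o : Option (List Psi)) : o.bind (act L) = o.map (L :: ·) := by
  cases o <;> rfl

lemma bind_act_a (k : Fin 4) (o : Option (List Psi)) : o.bind (act (a k)) = o.map (a k :: ·) := by
  cases o <;> rfl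

lemma rep_eq_of_hRel {x y : FreeAlgebra K Psi} (h : HRel K x y) : rep K x = rep K y := by
  cases h with
  | rel7 =>
    rw [rep_wrd, map_zero, ← ofPartialMap_none]
    rfl
  | rel8 | rel9 =>
    rw [rep_wrd, rep_wrd]
    rfl
  | _ =>
    rw [rep_wrd, rep_wrd]
    refine congrArg _ (funext fun r => ?_)
    simp [actWord, act, pushT, consQP, bind_act_L, bind_act_a, Option.map_map,
      Function.comp_def, *]

def repH : AlgH K →ₐ[K] Module.End K (List Psi →₀ K) :=
  RingQuot.liftAlgHom K ⟨rep K, fun _ _ => rep_eq_of_hRel⟩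

lemma repH_mkw (l : List Psi) : repH (mkw K l) = ofPartialMap K (actWord l) := by
  rw [repH, mkw, RingQuot.liftAlgHom_mkAlgHom_apply, rep_wrd]

lemma actWord_append (l₁ l₂ r : List Psi) :
    actWord (l₁ ++ l₂) r = (actWord l₂ r).bind (actWord l₁) := by
  induction l₁ with
  | nil => simp [actWord]
  | cons x l₁ ih => simp [actWord, ih, Option.bind_assoc]

lemma actWord_map_a (U : List (Fin 4)) (r : List Psi) :
    actWord (U.map a) r = some (U.map a ++ r) := by
  induction U with
  | nil => rfl
  | cons u U ih => simp [actWord, ih, act]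

lemma actWord_confWord {c : Config} (hc : ¬(c.state = 4 ∧ c.color = 3)) (r : List Psi) :
    actWord (confWord c) r = some (confWord c ++ r) := by
  rw [← instr_eq_none_iff] at hc
  simp [confWord_eq, actWord_append, actWord_map_a, actWord, act, consQP, hc]

lemma actWord_replicate_s (n : ℕ) :
    actWord (List.replicate n s) [] = some (List.replicate n s) := by
  induction n with
  | zero => rfl
  | succ n ih =>
    rw [List.replicate_succ, actWord, ih, Option.bind_some]
    cases n <;> rfl

lemma F_mul_sEl_pow_ne_zero {c : Config} (hc : ¬(c.state = 4 ∧ c.color = 3)) (n : ℕ) :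
    F K c * sEl K ^ n ≠ 0 := by
  intro h
  have h' := congrArg (fun x => repH x (Finsupp.single [] 1)) h
  simp only [F, sEl, ← mkw_replicate, ← mkw_append, repH_mkw, ofPartialMap_single,
    actWord_append, actWord_replicate_s, Option.bind_some, actWord_confWord hc, map_zero,
    LinearMap.zero_apply] at h'
  simp at h'

end MinskyUTM

open MinskyUTM in
/-- The machine started in the configuration `M(i,j,U,V)` halts in finitely
many steps if and only if there is a positive integer `N` with `t^N · F(i,j,U,V) = 0` in `H`. -/
theorem halts_iff_tN_mul_F_eq_zero (K : Type*) [Field K] (c : Config) :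
    Halts c ↔ ∃ N : ℕ, 0 < N ∧ tEl K ^ N * F K c = 0 := by
  constructor
  · rintro ⟨n, c', hn, hstop⟩
    refine ⟨n + 1, n.succ_pos, ?_⟩
    rw [pow_succ', mul_assoc, tEl_pow_mul_F hn, F_eq_zero_of_stop hstop, zero_mul, mul_zero]
  · rintro ⟨N, -, hN⟩
    by_contra hc
    obtain ⟨c', hc', hstop⟩ := exists_stepsFrom_of_not_halts hc N
    rw [tEl_pow_mul_F hc'] at hN
    exact F_mul_sEl_pow_ne_zero hstop N hN
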